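/- For a 2×2 density matrix ρ, the maximum of (1/2)‖[ρ,H]‖₁ over diagonal Hermitian H with operator norm ‖H‖_∞ ≤ 1 equals 2|ρ₁₂|, attained at H = |1⟩⟨1| − |2⟩⟨2|. -/

import Mathlib

open Matrix Complex
open scoped ComplexOrder

/-- Old Mathlib's `Matrix.PosSemidef.sqrt` (removed upstream), restated with its old definition. -/
noncomputable def Matrix.PosSemidef.sqrt {n 𝕜 : Type*} [Fintype n] [DecidableEq n] [RCLike 𝕜]
    {A : Matrix n n 𝕜} (hA : A.PosSemidef) : Matrix n n 𝕜 :=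
  (hA.1.eigenvectorUnitary : Matrix n n 𝕜) * diagonal ((↑) ∘ Real.sqrt ∘ hA.1.eigenvalues) *
    (star (hA.1.eigenvectorUnitary : Matrix n n 𝕜))

/-- Trace norm `‖A‖₁ = tr √(AᴴA)`. -/
noncomputable def traceNorm {d : ℕ} (A : Matrix (Fin d) (Fin d) ℂ) : ℝ :=
  ((Matrix.posSemidef_conjTranspose_mul_self A).sqrt).trace.re

/-!
A commutator `[ρ, H]` with a diagonal `H` has zero diagonal and off-diagonal entries
`ρᵢⱼ (hⱼ - hᵢ)`. A `2 × 2` matrix `M` with zero diagonal has `MᴴM` diagonal with entries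
`|M₁₀|², |M₀₁|²`, so `‖M‖₁ = |M₀₁| + |M₁₀|`; for Hermitian `ρ` this gives
`(1/2)‖[ρ, H]‖₁ = |ρ₀₁| |h₀ - h₁|`, which is maximised under `|hⱼ| ≤ 1` by `h = (1, -1)`.
-/

open scoped MatrixOrder in
theorem Matrix.PosSemidef.eq_sqrt_of_sq_eq {n 𝕜 : Type*} [Fintype n] [DecidableEq n]
    [RCLike 𝕜] {A B : Matrix n n 𝕜} (hA : A.PosSemidef) (hB : B.PosSemidef) (hsq : A ^ 2 = B) :
    A = hB.sqrt := by
  have hsqrt : hB.sqrt = CFC.sqrt B := by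
    rw [CFC.sqrt_eq_real_sqrt B hB.nonneg, cfcₙ_eq_cfc, hB.1.cfc_eq, IsHermitian.cfc,
      Unitary.conjStarAlgAut_apply, Matrix.PosSemidef.sqrt]
  rw [hsqrt, eq_comm, CFC.sqrt_eq_iff B A hB.nonneg hA.nonneg, ← sq, hsq]

theorem traceNorm_of_diag_eq_zero {M : Matrix (Fin 2) (Fin 2) ℂ} (h0 : M 0 0 = 0)
    (h1 : M 1 1 = 0) : traceNorm M = ‖M 0 1‖ + ‖M 1 0‖ := by
  set S : Matrix (Fin 2) (Fin 2) ℂ := diagonal ![(‖M 1 0‖ : ℂ), (‖M 0 1‖ : ℂ)] with hS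
  have hS_psd : S.PosSemidef := by
    refine posSemidef_diagonal_iff.mpr fun i => ?_
    fin_cases i <;> simp [Complex.zero_le_real]
  have hS_sq : S ^ 2 = Mᴴ * M := by
    rw [pow_two]
    ext i j
    fin_cases i <;> fin_cases j <;>
      simp [hS, mul_apply, Fin.sum_univ_two, h0, h1, Complex.conj_mul', sq]
  rw [traceNorm, ← hS_psd.eq_sqrt_of_sq_eq (posSemidef_conjTranspose_mul_self M) hS_sq, hS]
  simp [trace, Fin.sum_univ_two, add_comm]

theorem Matrix.commutator_diagonal_apply {n R : Type*} [Fintype n] [DecidableEq n] [CommRing R]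
    (A : Matrix n n R) (d : n → R) (i j : n) :
    (A * diagonal d - diagonal d * A) i j = A i j * (d j - d i) := by
  rw [sub_apply, mul_diagonal, diagonal_mul, mul_sub, mul_comm (d i)]

theorem Matrix.IsHermitian.traceNorm_commutator_diagonal {ρ : Matrix (Fin 2) (Fin 2) ℂ}
    (hρ : ρ.IsHermitian) (h : Fin 2 → ℝ) :
    (1 / 2) * traceNorm (ρ * diagonal (fun j => (h j : ℂ)) - diagonal (fun j => (h j : ℂ)) * ρ)
      = ‖ρ 0 1‖ * |h 0 - h 1| := by
  have h10 : ρ 1 0 = star (ρ 0 1) := (hρ.apply 1 0).symm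
  rw [traceNorm_of_diag_eq_zero (by rw [commutator_diagonal_apply, sub_self, mul_zero])
    (by rw [commutator_diagonal_apply, sub_self, mul_zero])]
  simp only [commutator_diagonal_apply, h10, norm_mul, norm_star, ← Complex.ofReal_sub,
    Complex.norm_real, Real.norm_eq_abs]
  rw [abs_sub_comm (h 1)]
  ring

theorem qubit_gradient_op_general (ρ : Matrix (Fin 2) (Fin 2) ℂ)
    (hρ : ρ.PosSemidef) :
    IsGreatest {x : ℝ | ∃ h : Fin 2 → ℝ, (∀ j, |h j| ≤ 1) ∧
        x = (1 / 2) * traceNorm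
          (ρ * Matrix.diagonal (fun j => (h j : ℂ))
            - Matrix.diagonal (fun j => (h j : ℂ)) * ρ)}
      (2 * ‖ρ 0 1‖) ∧
    (1 / 2) * traceNorm
        (ρ * Matrix.diagonal ![(1 : ℂ), -1]
          - Matrix.diagonal ![(1 : ℂ), -1] * ρ)
      = 2 * ‖ρ 0 1‖ := by
  have h_sign : diagonal ![(1 : ℂ), -1] = diagonal (fun j => ((![1, -1] : Fin 2 → ℝ) j : ℂ)) := by
    congr 1; ext j; fin_cases j <;> simp
  have h_attained : (1 / 2) * traceNorm
      (ρ * diagonal ![(1 : ℂ), -1] - diagonal ![(1 : ℂ), -1] * ρ) = 2 * ‖ρ 0 1‖ := by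
    rw [h_sign, hρ.1.traceNorm_commutator_diagonal]
    norm_num [mul_comm]
  refine ⟨⟨⟨![1, -1], fun j => by fin_cases j <;> simp, ?_⟩, ?_⟩, h_attained⟩
  · rw [← h_sign, h_attained]
  · rintro x ⟨h, h_le, rfl⟩
    have h_gap : |h 0 - h 1| ≤ 2 :=
      (abs_sub _ _).trans (by linarith [h_le 0, h_le 1])
    rw [hρ.1.traceNorm_commutator_diagonal]
    linarith [mul_le_mul_of_nonneg_left h_gap (norm_nonneg (ρ 0 1))]

/-- For a qubit density matrix `ρ`, the maximum of `(1/2)‖[ρ,H]‖₁` over real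
diagonal `H` with operator norm `‖H‖_∞ ≤ 1` (i.e. all diagonal entries of
modulus at most 1) equals `2|ρ₁₂|`, attained at `H = |1⟩⟨1| − |2⟩⟨2|`. -/
theorem qubit_gradient_op (ρ : Matrix (Fin 2) (Fin 2) ℂ)
    (hρ : ρ.PosSemidef) (htr : ρ.trace = 1) :
    IsGreatest {x : ℝ | ∃ h : Fin 2 → ℝ, (∀ j, |h j| ≤ 1) ∧
        x = (1 / 2) * traceNorm
          (ρ * Matrix.diagonal (fun j => (h j : ℂ))
            - Matrix.diagonal (fun j => (h j : ℂ)) * ρ)}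
      (2 * ‖ρ 0 1‖) ∧
    (1 / 2) * traceNorm
        (ρ * Matrix.diagonal ![(1 : ℂ), -1]
          - Matrix.diagonal ![(1 : ℂ), -1] * ρ)
      = 2 * ‖ρ 0 1‖ :=
  qubit_gradient_op_general ρ hρ
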